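/- The map f : ℝ³ → ℝ³ given in cylindrical coordinates by f(r, θ, z) = (r, θ - z, ½ z (1 + z²/3 + r²)) is a bijection. -/

import Mathlib

/-!
Write `f(x, y, z) = (R_z(x, y), h_{x² + y²}(z))`, where `R_z` is the rotation by `-z` and
`h_s(z) = ½ z (1 + z²/3 + s)`. Since `R_z` preserves `x² + y²`, the image of a point determines
`s = x² + y²`; for `s ≥ -1` the cubic `h_s` is a strictly increasing bijection of `ℝ`, so the
image also determines `z`, and finally `(x, y)` is `R_{-z}` applied to its first two coordinates.
-/

/-- The map `f(r, θ, z) = (r, θ - z, ½ z (1 + z²/3 + r²))`, written in Cartesian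
coordinates `(x, y, z)` as a rotation by angle `-z` in the `(x,y)`-plane together with a
reparametrization of `z`. -/
noncomputable def fGeiges : ℝ × ℝ × ℝ → ℝ × ℝ × ℝ :=
  fun p =>
    (p.1 * Real.cos p.2.2 + p.2.1 * Real.sin p.2.2,
     -p.1 * Real.sin p.2.2 + p.2.1 * Real.cos p.2.2,
     p.2.2 * (1 + p.2.2 ^ 2 / 3 + p.1 ^ 2 + p.2.1 ^ 2) / 2)

open Real Filter Function

noncomputable def geigesHeight (s z : ℝ) : ℝ := z * (1 + z ^ 2 / 3 + s) / 2

theorem continuous_geigesHeight (s : ℝ) : Continuous (geigesHeight s) := by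
  unfold geigesHeight
  fun_prop

section GeigesHeight

variable {s : ℝ}

theorem geigesHeight_strictMono (hs : -1 ≤ s) : StrictMono (geigesHeight s) := by
  intro a b hab
  have hba : 0 < b - a := sub_pos.mpr hab
  have hquad : 0 < a ^ 2 + a * b + b ^ 2 := by
    nlinarith [sq_nonneg (a + b), sq_pos_of_pos hba]
  -- `h(b) - h(a) = (b - a) ((1 + s) + (a² + ab + b²) / 3) / 2`
  simp only [geigesHeight]
  nlinarith [mul_pos hba hquad, mul_nonneg hba.le (neg_le_iff_add_nonneg.mp hs)]

theorem tendsto_geigesHeight_atTop (hs : -1 ≤ s) : Tendsto (geigesHeight s) atTop atTop := by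
  refine tendsto_atTop_mono' atTop ?_ (tendsto_id.atTop_div_const (by norm_num : (0 : ℝ) < 6))
  filter_upwards [eventually_ge_atTop 1] with z hz
  simp only [geigesHeight, id]
  nlinarith [mul_nonneg (by linarith : (0 : ℝ) ≤ z) (neg_le_iff_add_nonneg.mp hs),
    mul_nonneg (by linarith : (0 : ℝ) ≤ z) (by nlinarith : (0 : ℝ) ≤ z ^ 2 - 1)]

theorem tendsto_geigesHeight_atBot (hs : -1 ≤ s) : Tendsto (geigesHeight s) atBot atBot := by
  refine tendsto_atBot_mono' atBot ?_ (tendsto_id.atBot_div_const (by norm_num : (0 : ℝ) < 6))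
  filter_upwards [eventually_le_atBot (-1)] with z hz
  simp only [geigesHeight, id]
  nlinarith [mul_nonneg (by linarith : (0 : ℝ) ≤ -z) (neg_le_iff_add_nonneg.mp hs),
    mul_nonneg (by linarith : (0 : ℝ) ≤ -z) (by nlinarith : (0 : ℝ) ≤ z ^ 2 - 1)]

theorem geigesHeight_bijective (hs : -1 ≤ s) : Bijective (geigesHeight s) :=
  ⟨(geigesHeight_strictMono hs).injective,
    (continuous_geigesHeight s).surjective (tendsto_geigesHeight_atTop hs)
      (tendsto_geigesHeight_atBot hs)⟩

end GeigesHeight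

/-- Rotation of the plane by the angle `-θ`. -/
noncomputable def planeRotation (θ : ℝ) (p : ℝ × ℝ) : ℝ × ℝ :=
  (p.1 * cos θ + p.2 * sin θ, -p.1 * sin θ + p.2 * cos θ)

theorem planeRotation_sq_add_sq (θ : ℝ) (p : ℝ × ℝ) :
    (planeRotation θ p).1 ^ 2 + (planeRotation θ p).2 ^ 2 = p.1 ^ 2 + p.2 ^ 2 := by
  simp only [planeRotation]
  linear_combination (p.1 ^ 2 + p.2 ^ 2) * sin_sq_add_cos_sq θ

theorem planeRotation_neg_planeRotation (θ : ℝ) (p : ℝ × ℝ) :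
    planeRotation (-θ) (planeRotation θ p) = p := by
  simp only [planeRotation, cos_neg, sin_neg]
  ext
  · linear_combination p.1 * sin_sq_add_cos_sq θ
  · linear_combination p.2 * sin_sq_add_cos_sq θ

theorem planeRotation_planeRotation_neg (θ : ℝ) (p : ℝ × ℝ) :
    planeRotation θ (planeRotation (-θ) p) = p := by
  simpa using planeRotation_neg_planeRotation (-θ) p

theorem fGeiges_apply (x y z : ℝ) :
    fGeiges (x, y, z) = ((planeRotation z (x, y)).1, (planeRotation z (x, y)).2,
      geigesHeight (x ^ 2 + y ^ 2) z) := by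
  simp only [fGeiges, planeRotation, geigesHeight, add_assoc]

/-- The map `f(r, θ, z) = (r, θ - z, ½ z (1 + z²/3 + r²))` is a bijection of `ℝ³`. -/
theorem fGeiges_bijective : Function.Bijective fGeiges := by
  have height_bij (p : ℝ × ℝ) : Bijective (geigesHeight (p.1 ^ 2 + p.2 ^ 2)) :=
    geigesHeight_bijective (by nlinarith [sq_nonneg p.1, sq_nonneg p.2])
  constructor
  · rintro ⟨x₁, y₁, z₁⟩ ⟨x₂, y₂, z₂⟩ h
    simp only [fGeiges_apply, Prod.mk.injEq] at h
    obtain ⟨hu, hv, hh⟩ := h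
    have hrot : planeRotation z₁ (x₁, y₁) = planeRotation z₂ (x₂, y₂) := Prod.ext hu hv
    have hnorm : x₁ ^ 2 + y₁ ^ 2 = x₂ ^ 2 + y₂ ^ 2 := by
      have := congrArg (fun q => q.1 ^ 2 + q.2 ^ 2) hrot
      rwa [planeRotation_sq_add_sq, planeRotation_sq_add_sq] at this
    rw [← hnorm] at hh
    obtain rfl : z₁ = z₂ := (height_bij (x₁, y₁)).injective hh
    have hxy := congrArg (planeRotation (-z₁)) hrot
    simp only [planeRotation_neg_planeRotation, Prod.mk.injEq] at hxy
    rw [hxy.1, hxy.2]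
  · rintro ⟨a, b, c⟩
    obtain ⟨z, hz⟩ := (height_bij (a, b)).surjective c
    refine ⟨((planeRotation (-z) (a, b)).1, (planeRotation (-z) (a, b)).2, z), ?_⟩
    simpa only [fGeiges_apply, Prod.mk.eta, planeRotation_planeRotation_neg,
      planeRotation_sq_add_sq] using
      congrArg (fun w => (a, b, w)) hz
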